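/- arXiv:2510.14310 — 5 statements merged into one kernel-verified Lean document; each statement's English description precedes it below -/
import Mathlib

section
/- Let v : [0,1] → ℝ be continuous on [0,1], continuously differentiable with v'(0) = 0, and satisfy (τ v'(τ))' = -Ha²·τ·(1 - v(τ)/(1 - α v(τ))) on (0,1). Assume α > 0, Ha² > 0, and 0 ≤ v(τ) < 1/(1 + α) for all τ ∈ (0,1). Then v'(τ) < 0 for all τ ∈ (0,1); i.e., v is strictly decreasing on (0,1). -/
open Set

/-! Since `τ ↦ τ v'(τ)` vanishes at `0` and, by the equation, has derivative
`-Ha² τ (1 - v/(1 - α v)) < 0` on `(0, 1)`, it is strictly decreasing, so `τ v'(τ) < 0`. -/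

theorem one_sub_div_one_sub_mul_pos {α v : ℝ} (hα : 0 ≤ α) (hv : v < 1 / (1 + α)) :
    0 < 1 - v / (1 - α * v) := by
  have hv' : v * (1 + α) < 1 := (lt_div_iff₀ (by linarith)).mp hv
  have hden : 0 < 1 - α * v := by nlinarith
  have hlt : v / (1 - α * v) < 1 := (div_lt_one hden).mpr (by linarith)
  linarith

theorem lt_zero_of_hasDerivAt_id_mul_neg {u f' : ℝ → ℝ} {τ : ℝ} (hτ : 0 < τ)
    (hu : ContinuousOn u (Icc 0 τ))
    (hf : ∀ x ∈ Ioo 0 τ, HasDerivAt (fun s => s * u s) (f' x) x)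
    (hf' : ∀ x ∈ Ioo 0 τ, f' x < 0) : u τ < 0 := by
  have hanti : StrictAntiOn (fun s => s * u s) (Icc 0 τ) := by
    refine strictAntiOn_of_hasDerivWithinAt_neg (f' := f') (convex_Icc 0 τ)
      (continuousOn_id.mul hu) (fun x hx => ?_) (fun x hx => ?_)
    · rw [interior_Icc] at hx ⊢
      exact (hf x hx).hasDerivWithinAt
    · rw [interior_Icc] at hx
      exact hf' x hx
  have hτu : τ * u τ < 0 * u 0 :=
    hanti (left_mem_Icc.mpr hτ.le) (right_mem_Icc.mpr hτ.le) hτ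
  rw [zero_mul] at hτu
  exact neg_of_mul_neg_right hτu hτ.le

theorem stmt_6_general (α Ha : ℝ) (v v' : ℝ → ℝ)
    (hα : 0 < α) (hHa : 0 < Ha ^ 2)
    (hv'c : ContinuousOn v' (Set.Icc 0 1))
    (heq : ∀ τ ∈ Set.Ioo (0 : ℝ) 1,
      HasDerivAt (fun s => s * v' s) (-Ha ^ 2 * τ * (1 - v τ / (1 - α * v τ))) τ)
    (hbnd : ∀ τ ∈ Set.Ioo (0 : ℝ) 1, 0 ≤ v τ ∧ v τ < 1 / (1 + α)) :
    ∀ τ ∈ Set.Ioo (0 : ℝ) 1, v' τ < 0 := by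
  intro τ ⟨hτ0, hτ1⟩
  have hsub : Ioo 0 τ ⊆ Ioo (0 : ℝ) 1 := Ioo_subset_Ioo_right hτ1.le
  refine lt_zero_of_hasDerivAt_id_mul_neg hτ0 (hv'c.mono (Icc_subset_Icc_right hτ1.le))
    (fun x hx => heq x (hsub hx)) (fun x hx => ?_)
  exact mul_neg_of_neg_of_pos (mul_neg_of_neg_of_pos (neg_neg_of_pos hHa) hx.1)
    (one_sub_div_one_sub_mul_pos hα.le (hbnd x (hsub hx)).2)

theorem stmt_6 (α Ha : ℝ) (v v' : ℝ → ℝ)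
    (hα : 0 < α) (hHa : 0 < Ha ^ 2)
    (hc : ContinuousOn v (Set.Icc 0 1))
    (hd : ∀ τ ∈ Set.Icc (0 : ℝ) 1, HasDerivAt v (v' τ) τ)
    (hv'c : ContinuousOn v' (Set.Icc 0 1))
    (hbc0 : v' 0 = 0)
    (heq : ∀ τ ∈ Set.Ioo (0 : ℝ) 1,
      HasDerivAt (fun s => s * v' s) (-Ha ^ 2 * τ * (1 - v τ / (1 - α * v τ))) τ)
    (hbnd : ∀ τ ∈ Set.Ioo (0 : ℝ) 1, 0 ≤ v τ ∧ v τ < 1 / (1 + α)) :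
    ∀ τ ∈ Set.Ioo (0 : ℝ) 1, v' τ < 0 :=
  stmt_6_general α Ha v v' hα hHa hv'c heq hbnd
end

section
/- Let v : [0,1] → ℝ be continuously differentiable with v'(0) = 0 and v(1) = 0, and satisfy (τ v'(τ))' = -Ha²·τ·(1 - v(τ)/(1 - α v(τ))) on (0,1). If 1 - v(τ)/(1 - α v(τ)) ≤ 1 for all τ ∈ (0,1) (e.g. when 0 ≤ v < 1/α), then v(τ) ≤ (Ha²/4)·(1 - τ²) for all τ ∈ [0,1]. -/
/-!
Since `(τ v')' ≥ -Ha² τ` and `τ v'` vanishes at `τ = 0`, comparison with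
`-Ha² τ² / 2` gives `v'(τ) ≥ -Ha² τ / 2`; comparing `v` with `-Ha² τ² / 4` on
`[τ, 1]` and using `v(1) = 0` then gives the bound.
-/

open Set

lemma sub_le_sub_of_hasDerivAt_le {f g f' g' : ℝ → ℝ} {a b : ℝ} (hab : a ≤ b)
    (hf : ContinuousOn f (Icc a b)) (hg : ContinuousOn g (Icc a b))
    (hf' : ∀ x ∈ Ioo a b, HasDerivAt f (f' x) x)
    (hg' : ∀ x ∈ Ioo a b, HasDerivAt g (g' x) x)
    (hle : ∀ x ∈ Ioo a b, f' x ≤ g' x) :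
    f b - f a ≤ g b - g a := by
  have hmono : MonotoneOn (fun x => g x - f x) (Icc a b) := by
    refine monotoneOn_of_hasDerivWithinAt_nonneg (convex_Icc a b) (hg.sub hf) (f' := g' - f')
      (fun x hx => ?_) (fun x hx => ?_) <;> rw [interior_Icc] at hx
    · exact ((hg' x hx).sub (hf' x hx)).hasDerivWithinAt
    · exact sub_nonneg.mpr (hle x hx)
  have := hmono (left_mem_Icc.mpr hab) (right_mem_Icc.mpr hab) hab
  linarith

lemma neg_mul_sq_div_two_le_mul_deriv {v' F : ℝ → ℝ} {K b : ℝ}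
    (hc : ContinuousOn v' (Icc 0 b)) (h0 : v' 0 = 0)
    (hF : ∀ s ∈ Ioo 0 b, HasDerivAt (fun s => s * v' s) (F s) s)
    (hFle : ∀ s ∈ Ioo 0 b, -K * s ≤ F s) :
    ∀ τ ∈ Icc 0 b, -K * τ ^ 2 / 2 ≤ τ * v' τ := by
  rintro τ ⟨hτ0, hτb⟩
  have hcτ : ContinuousOn v' (Icc 0 τ) := hc.mono (Icc_subset_Icc_right hτb)
  have hcomp := sub_le_sub_of_hasDerivAt_le hτ0 (f := fun s => -K * s ^ 2 / 2)
    (g := fun s => s * v' s) (by fun_prop) (continuousOn_id.mul hcτ)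
    (fun s _ => (((hasDerivAt_pow 2 s).const_mul (-K)).div_const 2).congr_deriv
      (by push_cast; ring))
    (fun s hs => hF s ⟨hs.1, hs.2.trans_le hτb⟩)
    (fun s hs => hFle s ⟨hs.1, hs.2.trans_le hτb⟩)
  simp only [h0] at hcomp
  linarith

lemma le_add_mul_sq_sub_of_neg_mul_le_deriv {v v' : ℝ → ℝ} {K τ b : ℝ} (hτb : τ ≤ b)
    (hv : ContinuousOn v (Icc τ b)) (hd : ∀ s ∈ Ioo τ b, HasDerivAt v (v' s) s)
    (hslope : ∀ s ∈ Ioo τ b, -K * s / 2 ≤ v' s) :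
    v τ ≤ v b + K / 4 * (b ^ 2 - τ ^ 2) := by
  have hcomp := sub_le_sub_of_hasDerivAt_le hτb (f := fun s => -K * s ^ 2 / 4) (g := v)
    (by fun_prop) hv
    (fun s _ => (((hasDerivAt_pow 2 s).const_mul (-K)).div_const 4).congr_deriv
      (by push_cast; ring))
    hd hslope
  linarith

theorem stmt_8 (α Ha : ℝ) (v v' : ℝ → ℝ)
    (hd : ∀ τ, HasDerivAt v (v' τ) τ) (hv'c : Continuous v')
    (hbc0 : v' 0 = 0) (hbc1 : v 1 = 0)
    (heq : ∀ τ ∈ Set.Ioo (0 : ℝ) 1,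
      HasDerivAt (fun s => s * v' s) (-Ha ^ 2 * τ * (1 - v τ / (1 - α * v τ))) τ)
    (hbnd : ∀ τ ∈ Set.Ioo (0 : ℝ) 1, 1 - v τ / (1 - α * v τ) ≤ 1) :
    ∀ τ ∈ Set.Icc (0 : ℝ) 1, v τ ≤ Ha ^ 2 / 4 * (1 - τ ^ 2) := by
  have hsource :
      ∀ s ∈ Ioo (0 : ℝ) 1, -Ha ^ 2 * s ≤ -Ha ^ 2 * s * (1 - v s / (1 - α * v s)) := by
    intro s hs
    have := mul_le_mul_of_nonneg_left (hbnd s hs) (mul_nonneg (sq_nonneg Ha) hs.1.le)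
    linarith
  have hflux := neg_mul_sq_div_two_le_mul_deriv hv'c.continuousOn hbc0 heq hsource
  rintro τ ⟨hτ0, hτ1⟩
  have hslope : ∀ s ∈ Ioo τ 1, -Ha ^ 2 * s / 2 ≤ v' s := fun s ⟨hτs, hs1⟩ => by
    have hs0 : 0 < s := hτ0.trans_lt hτs
    have := hflux s ⟨hs0.le, hs1.le⟩
    exact le_of_mul_le_mul_left (by linarith) hs0
  have hv : ContinuousOn v (Icc τ 1) := fun s _ => (hd s).continuousAt.continuousWithinAt
  have := le_add_mul_sq_sub_of_neg_mul_le_deriv hτ1 hv (fun s _ => hd s) hslope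
  rw [hbc1] at this
  linarith
end

section
/- Let v₁, v₂ : [0,1] → ℝ be continuous on [0,1], continuously differentiable with vᵢ'(0) = 0, vᵢ(1) = 0, satisfying (τ vᵢ'(τ))' = -Ha²·τ·(1 - vᵢ(τ)/(1 - α vᵢ(τ))) on (0,1), with 0 ≤ vᵢ(τ) < 1/(1 + α) for all τ. If α > 0 and Ha² > 0, then v₁ = v₂ on [0,1]. -/
open Set MeasureTheory intervalIntegral

theorem stmt_10 (α Ha : ℝ) (v₁ v₂ v₁' v₂' : ℝ → ℝ)
    (hα : 0 < α) (hHa : 0 < Ha ^ 2)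
    (hc₁ : ContinuousOn v₁ (Set.Icc 0 1)) (hc₂ : ContinuousOn v₂ (Set.Icc 0 1))
    (hd₁ : ∀ τ ∈ Set.Icc (0 : ℝ) 1, HasDerivAt v₁ (v₁' τ) τ)
    (hd₂ : ∀ τ ∈ Set.Icc (0 : ℝ) 1, HasDerivAt v₂ (v₂' τ) τ)
    (hv₁'c : ContinuousOn v₁' (Set.Icc 0 1)) (hv₂'c : ContinuousOn v₂' (Set.Icc 0 1))
    (hbc0₁ : v₁' 0 = 0) (hbc0₂ : v₂' 0 = 0)
    (hbc1₁ : v₁ 1 = 0) (hbc1₂ : v₂ 1 = 0)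
    (heq₁ : ∀ τ ∈ Set.Ioo (0 : ℝ) 1,
      HasDerivAt (fun s => s * v₁' s) (-Ha ^ 2 * τ * (1 - v₁ τ / (1 - α * v₁ τ))) τ)
    (heq₂ : ∀ τ ∈ Set.Ioo (0 : ℝ) 1,
      HasDerivAt (fun s => s * v₂' s) (-Ha ^ 2 * τ * (1 - v₂ τ / (1 - α * v₂ τ))) τ)
    (hbnd₁ : ∀ τ ∈ Set.Icc (0 : ℝ) 1, 0 ≤ v₁ τ ∧ v₁ τ < 1 / (1 + α))
    (hbnd₂ : ∀ τ ∈ Set.Icc (0 : ℝ) 1, 0 ≤ v₂ τ ∧ v₂ τ < 1 / (1 + α)) :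
    ∀ τ ∈ Set.Icc (0 : ℝ) 1, v₁ τ = v₂ τ := by
  have h1α : (0:ℝ) < 1 + α := by linarith
  -- denominators are positive
  have hden₁ : ∀ τ ∈ Set.Icc (0:ℝ) 1, 0 < 1 - α * v₁ τ := by
    intro τ hτ
    obtain ⟨h0, h1⟩ := hbnd₁ τ hτ
    have := (lt_div_iff₀ h1α).mp h1
    nlinarith
  have hden₂ : ∀ τ ∈ Set.Icc (0:ℝ) 1, 0 < 1 - α * v₂ τ := by
    intro τ hτ
    obtain ⟨h0, h1⟩ := hbnd₂ τ hτ
    have := (lt_div_iff₀ h1α).mp h1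
    nlinarith
  set F : ℝ → ℝ := fun τ =>
    Ha ^ 2 * τ * (v₁ τ - v₂ τ) ^ 2 / ((1 - α * v₁ τ) * (1 - α * v₂ τ))
      + τ * (v₁' τ - v₂' τ) ^ 2 with hF
  set g : ℝ → ℝ := fun τ => (τ * v₁' τ - τ * v₂' τ) * (v₁ τ - v₂ τ) with hg
  -- derivative of g on (0,1)
  have hderiv : ∀ τ ∈ Set.Ioo (0:ℝ) 1, HasDerivAt g (F τ) τ := by
    intro τ hτ
    have hτ' : τ ∈ Set.Icc (0:ℝ) 1 := Ioo_subset_Icc_self hτ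
    have hp : HasDerivAt (fun s => s * v₁' s - s * v₂' s)
        ((-Ha ^ 2 * τ * (1 - v₁ τ / (1 - α * v₁ τ)))
          - (-Ha ^ 2 * τ * (1 - v₂ τ / (1 - α * v₂ τ)))) τ :=
      (heq₁ τ hτ).sub (heq₂ τ hτ)
    have hw : HasDerivAt (fun s => v₁ s - v₂ s) (v₁' τ - v₂' τ) τ :=
      (hd₁ τ hτ').sub (hd₂ τ hτ')
    have hmul := hp.mul hw
    convert hmul using 1
    · rfl
    · rfl
    · rfl
    have d₁ := hden₁ τ hτ'
    have d₂ := hden₂ τ hτ'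
    have d₁' : (1 - α * v₁ τ) ≠ 0 := ne_of_gt d₁
    have d₂' : (1 - α * v₂ τ) ≠ 0 := ne_of_gt d₂
    simp only [hF]
    field_simp [show 1 - v₁ τ * α ≠ 0 by rwa [mul_comm], show 1 - v₂ τ * α ≠ 0 by rwa [mul_comm]]
    ring
  -- integral of F is zero
  have hFcont : ContinuousOn F (Set.Icc 0 1) := by
    apply ContinuousOn.add
    · apply ContinuousOn.div
      · exact (continuousOn_const.mul continuousOn_id).mul ((hc₁.sub hc₂).pow 2)
      · exact (continuousOn_const.sub (continuousOn_const.mul hc₁)).mul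
          (continuousOn_const.sub (continuousOn_const.mul hc₂))
      · intro τ hτ
        exact ne_of_gt (mul_pos (hden₁ τ hτ) (hden₂ τ hτ))
    · exact continuousOn_id.mul ((hv₁'c.sub hv₂'c).pow 2)
  have hFint : IntervalIntegrable F volume 0 1 := by
    apply ContinuousOn.intervalIntegrable
    rwa [Set.uIcc_of_le (by norm_num : (0:ℝ) ≤ 1)]
  have hgcont : ContinuousOn g (Set.Icc 0 1) :=
    ((continuousOn_id.mul hv₁'c).sub (continuousOn_id.mul hv₂'c)).mul (hc₁.sub hc₂)
  have hftc : ∫ τ in (0:ℝ)..1, F τ = g 1 - g 0 :=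
    integral_eq_sub_of_hasDeriv_right_of_le (by norm_num) hgcont
      (fun τ hτ => (hderiv τ hτ).hasDerivWithinAt) hFint
  have hg1 : g 1 = 0 := by simp [hg, hbc1₁, hbc1₂]
  have hg0 : g 0 = 0 := by simp [hg]
  have hint0 : ∫ τ in (0:ℝ)..1, F τ = 0 := by rw [hftc, hg1, hg0]; ring
  -- F is nonneg on Ioc 0 1
  have hFnn : ∀ τ ∈ Set.Ioc (0:ℝ) 1, 0 ≤ F τ := by
    intro τ hτ
    have hτ' : τ ∈ Set.Icc (0:ℝ) 1 := Ioc_subset_Icc_self hτ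
    have d := mul_pos (hden₁ τ hτ') (hden₂ τ hτ')
    have hτ0 : 0 ≤ τ := le_of_lt hτ.1
    apply add_nonneg
    · exact div_nonneg (by positivity) (le_of_lt d)
    · positivity
  -- deduce F = 0 a.e., hence on Ioc
  have hFae : F =ᵐ[volume.restrict (Set.Ioc (0:ℝ) 1)] 0 := by
    rw [← integral_eq_zero_iff_of_le_of_nonneg_ae (by norm_num)
      ((ae_restrict_iff' measurableSet_Ioc).mpr (Filter.Eventually.of_forall hFnn)) hFint]
    exact hint0
  have hFeq : Set.EqOn F 0 (Set.Ioc 0 1) :=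
    Measure.eqOn_Ioc_of_ae_eq volume hFae (hFcont.mono Ioc_subset_Icc_self)
      continuousOn_const
  -- hence v₁ = v₂ on Ioc 0 1
  have hweq : Set.EqOn (fun τ => v₁ τ - v₂ τ) 0 (Set.Ioc 0 1) := by
    intro τ hτ
    have hτ' : τ ∈ Set.Icc (0:ℝ) 1 := Ioc_subset_Icc_self hτ
    have hF0 : F τ = 0 := hFeq hτ
    have d := mul_pos (hden₁ τ hτ') (hden₂ τ hτ')
    have hτ0 : 0 < τ := hτ.1
    have h2 : 0 ≤ τ * (v₁' τ - v₂' τ) ^ 2 := by positivity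
    have h1 : 0 ≤ Ha ^ 2 * τ * (v₁ τ - v₂ τ) ^ 2 / ((1 - α * v₁ τ) * (1 - α * v₂ τ)) :=
      div_nonneg (by positivity) (le_of_lt d)
    have hterm : Ha ^ 2 * τ * (v₁ τ - v₂ τ) ^ 2 / ((1 - α * v₁ τ) * (1 - α * v₂ τ)) = 0 := by
      simp only [hF] at hF0; linarith
    have hnum : Ha ^ 2 * τ * (v₁ τ - v₂ τ) ^ 2 = 0 := by
      rcases div_eq_zero_iff.mp hterm with h | h
      · exact h
      · exact absurd h (ne_of_gt d)
    have hsq : (v₁ τ - v₂ τ) ^ 2 = 0 := by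
      rcases mul_eq_zero.mp hnum with h | h
      · rcases mul_eq_zero.mp h with h' | h'
        · exact absurd h' (ne_of_gt hHa)
        · exact absurd h' (ne_of_gt hτ0)
      · exact h
    simpa [sub_eq_zero] using pow_eq_zero_iff (n := 2) (by norm_num) |>.mp hsq
  -- extend to Icc by continuity
  have hwcont : ContinuousOn (fun τ => v₁ τ - v₂ τ) (Set.Icc 0 1) := hc₁.sub hc₂
  have hclosure : Set.Icc (0:ℝ) 1 ⊆ closure (Set.Ioc 0 1) := by
    rw [closure_Ioc (by norm_num : (0:ℝ) ≠ 1)]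
  have hweqIcc : Set.EqOn (fun τ => v₁ τ - v₂ τ) 0 (Set.Icc 0 1) :=
    hweq.of_subset_closure hwcont continuousOn_const Ioc_subset_Icc_self hclosure
  intro τ hτ
  have := hweqIcc hτ
  simpa [sub_eq_zero] using this
end

section
/- Let v : [0,1] → ℝ be continuous, C¹ with v'(0) = 0, satisfy (τ v'(τ))' = -Ha²·τ·(1 - v(τ)/(1 - α v(τ))) on (0,1) with v(1) = 0, α > 0, Ha² > 0, and 0 ≤ v < 1/(1+α) on (0,1). Then v attains its maximum over [0,1] at τ = 0, i.e. v(0) = sup_{τ ∈ [0,1]} v(τ). -/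
/-!
Integrating `(τ v')' ≤ 0` from `0`, where `τ v'` vanishes, gives `τ v'(τ) ≤ 0`, so `v' ≤ 0` on
`(0, 1)` and `v` is antitone on `[0, 1]`. The sign of `(τ v')'` comes from the bound
`0 ≤ v < 1 / (1 + α)`, which forces `v / (1 - α v) < 1`.
-/

open Set

theorem antitoneOn_Icc_of_hasDerivAt_nonpos {f f' : ℝ → ℝ} {a b : ℝ}
    (hf : ContinuousOn f (Icc a b)) (hf' : ∀ x ∈ Ioo a b, HasDerivAt f (f' x) x)
    (hf'₀ : ∀ x ∈ Ioo a b, f' x ≤ 0) : AntitoneOn f (Icc a b) := by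
  refine antitoneOn_of_hasDerivWithinAt_nonpos (f' := f') (convex_Icc a b) hf ?_ ?_ <;>
    rw [interior_Icc]
  · exact fun x hx ↦ (hf' x hx).hasDerivWithinAt
  · exact hf'₀

theorem nonpos_of_hasDerivAt_id_mul_nonpos {u w : ℝ → ℝ} {b : ℝ}
    (hu : ContinuousOn u (Icc 0 b))
    (hw : ∀ τ ∈ Ioo 0 b, HasDerivAt (fun s ↦ s * u s) (w τ) τ)
    (hw₀ : ∀ τ ∈ Ioo 0 b, w τ ≤ 0) :
    ∀ τ ∈ Ioc 0 b, u τ ≤ 0 := by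
  intro τ hτ
  have hanti : AntitoneOn (fun s ↦ s * u s) (Icc 0 b) :=
    antitoneOn_Icc_of_hasDerivAt_nonpos (continuousOn_id.mul hu) hw hw₀
  have hτu : τ * u τ ≤ 0 * u 0 :=
    hanti ⟨le_rfl, hτ.1.le.trans hτ.2⟩ (Ioc_subset_Icc_self hτ) hτ.1.le
  rw [zero_mul] at hτu
  exact nonpos_of_mul_nonpos_right hτu hτ.1

theorem antitoneOn_of_hasDerivAt_id_mul_deriv_nonpos {f f' w : ℝ → ℝ} {b : ℝ}
    (hf : ∀ τ ∈ Icc 0 b, HasDerivAt f (f' τ) τ) (hf' : ContinuousOn f' (Icc 0 b))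
    (hw : ∀ τ ∈ Ioo 0 b, HasDerivAt (fun s ↦ s * f' s) (w τ) τ)
    (hw₀ : ∀ τ ∈ Ioo 0 b, w τ ≤ 0) :
    AntitoneOn f (Icc 0 b) := by
  have hf'₀ := nonpos_of_hasDerivAt_id_mul_nonpos hf' hw hw₀
  exact antitoneOn_Icc_of_hasDerivAt_nonpos
    (fun τ hτ ↦ (hf τ hτ).continuousAt.continuousWithinAt)
    (fun τ hτ ↦ hf τ (Ioo_subset_Icc_self hτ))
    (fun τ hτ ↦ hf'₀ τ (Ioo_subset_Ioc_self hτ))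

theorem one_sub_div_one_sub_mul_nonneg {α x : ℝ} (hx : 0 ≤ x) (hxα : x < 1 / (1 + α)) :
    0 ≤ 1 - x / (1 - α * x) := by
  have hα : 0 < 1 + α := by
    by_contra! h
    exact (hx.trans_lt hxα).not_ge (div_nonpos_of_nonneg_of_nonpos zero_le_one h)
  have hx_lt : x < 1 - α * x := by
    rw [lt_div_iff₀ hα] at hxα
    linarith
  rw [sub_nonneg]
  exact (div_lt_one (hx.trans_lt hx_lt)).2 hx_lt |>.le

theorem stmt_16_general (α Ha : ℝ) (v v' : ℝ → ℝ)
    (hd : ∀ τ ∈ Set.Icc (0 : ℝ) 1, HasDerivAt v (v' τ) τ)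
    (hv'c : ContinuousOn v' (Set.Icc 0 1))
    (heq : ∀ τ ∈ Set.Ioo (0 : ℝ) 1,
      HasDerivAt (fun s => s * v' s) (-Ha ^ 2 * τ * (1 - v τ / (1 - α * v τ))) τ)
    (hbnd : ∀ τ ∈ Set.Ioo (0 : ℝ) 1, 0 ≤ v τ ∧ v τ < 1 / (1 + α)) :
    IsGreatest (v '' Set.Icc (0 : ℝ) 1) (v 0) := by
  have hrhs : ∀ τ ∈ Ioo (0 : ℝ) 1, -Ha ^ 2 * τ * (1 - v τ / (1 - α * v τ)) ≤ 0 := by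
    intro τ hτ
    have h := one_sub_div_one_sub_mul_nonneg (hbnd τ hτ).1 (hbnd τ hτ).2
    have hτ₀ : 0 ≤ Ha ^ 2 * τ := mul_nonneg (sq_nonneg Ha) hτ.1.le
    nlinarith
  exact (antitoneOn_of_hasDerivAt_id_mul_deriv_nonpos hd hv'c heq hrhs).map_isLeast
    (isLeast_Icc zero_le_one)

theorem stmt_16 (α Ha : ℝ) (v v' : ℝ → ℝ)
    (hα : 0 < α) (hHa : 0 < Ha ^ 2)
    (hc : ContinuousOn v (Set.Icc 0 1))
    (hd : ∀ τ ∈ Set.Icc (0 : ℝ) 1, HasDerivAt v (v' τ) τ)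
    (hv'c : ContinuousOn v' (Set.Icc 0 1))
    (hbc0 : v' 0 = 0) (hbc1 : v 1 = 0)
    (heq : ∀ τ ∈ Set.Ioo (0 : ℝ) 1,
      HasDerivAt (fun s => s * v' s) (-Ha ^ 2 * τ * (1 - v τ / (1 - α * v τ))) τ)
    (hbnd : ∀ τ ∈ Set.Ioo (0 : ℝ) 1, 0 ≤ v τ ∧ v τ < 1 / (1 + α)) :
    IsGreatest (v '' Set.Icc (0 : ℝ) 1) (v 0) :=
  stmt_16_general α Ha v v' hd hv'c heq hbnd
end

section
/- Let w : [0,1] → ℝ be C¹ on [0,1] with w(1) = 0 and w'(0) = 0, and suppose (τ w'(τ))' = τ·h(τ)·w(τ) on (0,1) for some continuous h : [0,1] → ℝ with h(τ) ≥ 0. Then w is identically zero on [0,1]. -/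
/-! The flux `g τ = τ w'(τ) w(τ)` vanishes at `τ = 0` and has derivative
`τ h w² + τ w'² ≥ 0`, so `g ≥ 0`; hence `w w' ≥ 0` on `(0, 1)`, so `w²` is nondecreasing,
and `w(1) = 0` forces `w² ≤ 0`. No integration by parts is needed. -/

open Set

lemma monotoneOn_Icc_of_hasDerivAt_nonneg {f f' : ℝ → ℝ} {a b : ℝ}
    (hf : ContinuousOn f (Icc a b)) (hf' : ∀ x ∈ Ioo a b, HasDerivAt f (f' x) x)
    (hf'₀ : ∀ x ∈ Ioo a b, 0 ≤ f' x) : MonotoneOn f (Icc a b) :=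
  monotoneOn_of_hasDerivWithinAt_nonneg (convex_Icc a b) hf
    (fun x hx ↦ (hf' x (by rwa [interior_Icc] at hx)).hasDerivWithinAt)
    (fun x hx ↦ hf'₀ x (by rwa [interior_Icc] at hx))

lemma flux_mul_nonneg {w w' h : ℝ → ℝ} {b : ℝ}
    (hwc : ContinuousOn w (Icc 0 b)) (hw'c : ContinuousOn w' (Icc 0 b))
    (hd : ∀ τ ∈ Ioo 0 b, HasDerivAt w (w' τ) τ) (hh : ∀ τ ∈ Ioo 0 b, 0 ≤ h τ)
    (heq : ∀ τ ∈ Ioo 0 b, HasDerivAt (fun s ↦ s * w' s) (τ * h τ * w τ) τ) :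
    ∀ τ ∈ Icc 0 b, 0 ≤ τ * w' τ * w τ := by
  have hmono : MonotoneOn (fun τ ↦ τ * w' τ * w τ) (Icc 0 b) := by
    refine monotoneOn_Icc_of_hasDerivAt_nonneg ((continuousOn_id.mul hw'c).mul hwc)
      (fun τ hτ ↦ (heq τ hτ).mul (hd τ hτ)) fun τ hτ ↦ ?_
    have hτh : 0 ≤ τ * h τ := mul_nonneg hτ.1.le (hh τ hτ)
    calc (0 : ℝ) ≤ τ * h τ * (w τ * w τ) + τ * (w' τ * w' τ) :=
          add_nonneg (mul_nonneg hτh (mul_self_nonneg _)) (mul_nonneg hτ.1.le (mul_self_nonneg _))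
      _ = τ * h τ * w τ * w τ + τ * w' τ * w' τ := by ring
  intro τ hτ
  simpa using hmono (left_mem_Icc.2 (hτ.1.trans hτ.2)) hτ hτ.1

lemma eqOn_zero_of_mul_deriv_nonneg {w w' : ℝ → ℝ} {a b : ℝ}
    (hwc : ContinuousOn w (Icc a b)) (hd : ∀ x ∈ Ioo a b, HasDerivAt w (w' x) x)
    (hnn : ∀ x ∈ Ioo a b, 0 ≤ w x * w' x) (hb : w b = 0) :
    ∀ x ∈ Icc a b, w x = 0 := by
  have hmono : MonotoneOn (fun x ↦ w x * w x) (Icc a b) :=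
    monotoneOn_Icc_of_hasDerivAt_nonneg (hwc.mul hwc) (fun x hx ↦ (hd x hx).mul (hd x hx))
      fun x hx ↦ by linarith [hnn x hx]
  intro x hx
  have hle : w x * w x ≤ w b * w b := hmono hx (right_mem_Icc.2 (hx.1.trans hx.2)) hx.2
  rw [hb, mul_zero] at hle
  exact mul_self_eq_zero.mp (le_antisymm hle (mul_self_nonneg _))

theorem stmt_17_general (w w' h : ℝ → ℝ)
    (hd : ∀ τ ∈ Set.Icc (0 : ℝ) 1, HasDerivAt w (w' τ) τ)
    (hw'c : ContinuousOn w' (Set.Icc 0 1))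
    (hbc1 : w 1 = 0)
    (hh : ∀ τ ∈ Set.Icc (0 : ℝ) 1, 0 ≤ h τ)
    (heq : ∀ τ ∈ Set.Ioo (0 : ℝ) 1,
      HasDerivAt (fun s => s * w' s) (τ * h τ * w τ) τ) :
    ∀ τ ∈ Set.Icc (0 : ℝ) 1, w τ = 0 := by
  have hwc : ContinuousOn w (Icc 0 1) := fun x hx ↦ (hd x hx).continuousAt.continuousWithinAt
  have hd' : ∀ τ ∈ Ioo (0 : ℝ) 1, HasDerivAt w (w' τ) τ := fun τ hτ ↦ hd τ (Ioo_subset_Icc_self hτ)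
  have hflux := flux_mul_nonneg hwc hw'c hd' (fun τ hτ ↦ hh τ (Ioo_subset_Icc_self hτ)) heq
  refine eqOn_zero_of_mul_deriv_nonneg hwc hd' (fun τ hτ ↦ ?_) hbc1
  have hτw : 0 ≤ τ * (w τ * w' τ) := by
    simpa only [mul_comm, mul_left_comm] using hflux τ (Ioo_subset_Icc_self hτ)
  exact nonneg_of_mul_nonneg_right hτw hτ.1

theorem stmt_17 (w w' h : ℝ → ℝ)
    (hd : ∀ τ ∈ Set.Icc (0 : ℝ) 1, HasDerivAt w (w' τ) τ)
    (hw'c : ContinuousOn w' (Set.Icc 0 1))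
    (hbc1 : w 1 = 0) (hbc0 : w' 0 = 0)
    (hhc : ContinuousOn h (Set.Icc 0 1)) (hh : ∀ τ ∈ Set.Icc (0 : ℝ) 1, 0 ≤ h τ)
    (heq : ∀ τ ∈ Set.Ioo (0 : ℝ) 1,
      HasDerivAt (fun s => s * w' s) (τ * h τ * w τ) τ) :
    ∀ τ ∈ Set.Icc (0 : ℝ) 1, w τ = 0 :=
  stmt_17_general w w' h hd hw'c hbc1 hh heq
end
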